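/- arXiv:1112.3841 — 2 statements merged into one kernel-verified Lean document; each statement's English description precedes it below -/
import Mathlib

section
/- For each integer n ≥ 1 define f_n(x) := ∑_{k=0}^{n} (n choose k) (−1)^{n−k} ∑_{j=0}^{k−1} (k−j) x^j ∈ ℚ[x]. Then f_1(x) = 1, and f_n(x) = x(x−1)^{n−2} for every n ≥ 2. -/
open Polynomial Finset

/-- `f_n(x) := ∑_{k=0}^{n} (n choose k) (−1)^{n−k} ∑_{j=0}^{k−1} (k−j) x^j ∈ ℚ[x]`. -/
noncomputable def f (n : ℕ) : ℚ[X] :=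
  ∑ k ∈ Finset.range (n + 1),
    (n.choose k : ℚ[X]) * (-1) ^ (n - k) *
      ∑ j ∈ Finset.range k, ((k - j : ℕ) : ℚ[X]) * X ^ j

noncomputable def g (k : ℕ) : ℚ[X] := ∑ j ∈ Finset.range k, ((k - j : ℕ) : ℚ[X]) * X ^ j

lemma dg (k : ℕ) : fwdDiff 1 g k = ∑ j ∈ Finset.range (k+1), X ^ j := by
  simp only [fwdDiff, g]
  rw [Finset.sum_range_succ]
  have : ∑ x ∈ range k, ((k + 1 - x : ℕ) : ℚ[X]) * X ^ x + ((k + 1 - k : ℕ):ℚ[X]) * X ^ k -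
      ∑ j ∈ range k, ((k - j : ℕ):ℚ[X]) * X ^ j
      = ∑ x ∈ range k, (((k + 1 - x : ℕ) : ℚ[X]) * X ^ x - ((k - x : ℕ):ℚ[X]) * X ^ x) + X ^ k := by
    rw [Finset.sum_sub_distrib]
    have : (k + 1 - k : ℕ) = 1 := by omega
    rw [this]; push_cast; ring
  rw [this, Finset.sum_range_succ]
  congr 1
  apply Finset.sum_congr rfl
  intro j hj
  simp only [Finset.mem_range] at hj
  rw [← sub_mul]
  have h1 : (k + 1 - j : ℕ) = (k - j) + 1 := by omega
  rw [h1]; push_cast; ring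

lemma d2g (k : ℕ) : fwdDiff 1 (fwdDiff 1 g) k = X ^ (k+1) := by
  have h1 := dg (k+1); have h2 := dg k
  simp only [fwdDiff] at *
  rw [h1, h2, Finset.sum_range_succ]
  ring

lemma f_eq_iter (n : ℕ) : f n = (fwdDiff 1)^[n] g 0 := by
  rw [fwdDiff_iter_eq_sum_shift]
  unfold f
  apply Finset.sum_congr rfl
  intro k hk
  rw [zsmul_eq_mul]
  have : ((0 : ℕ) + k • 1) = k := by simp
  rw [this]
  push_cast
  show _ = ((-1 : ℚ[X]) ^ (n - k) * (n.choose k : ℚ[X])) * g k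
  unfold g
  ring

/-- Lemma `f_n(x)` (2) of Kawazumi–Kuno: `f_1(x) = 1` and
`f_n(x) = x(x−1)^{n−2}` for every `n ≥ 2`. -/
theorem stmt1 : f 1 = 1 ∧ ∀ n : ℕ, 2 ≤ n → f n = X * (X - 1) ^ (n - 2) := by
  constructor
  · simp [f, Finset.sum_range_succ]
  · intro n hn
    obtain ⟨m, rfl⟩ : ∃ m, n = m + 2 := ⟨n - 2, by omega⟩
    rw [f_eq_iter, show m + 2 - 2 = m from rfl]
    rw [Function.iterate_add_apply (fwdDiff 1) m 2 g]
    have h2 : (fwdDiff 1)^[2] g = fun k => X ^ (k + 1) := by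
      funext k
      show fwdDiff 1 ((fwdDiff 1)^[1] g) k = _
      rw [Function.iterate_one]
      exact d2g k
    rw [h2, fwdDiff_iter_eq_sum_shift]
    have : X * (X - 1) ^ m = ∑ k ∈ range (m + 1), X ^ (k+1) * (-1:ℚ[X]) ^ (m - k) * (m.choose k : ℚ[X]) := by
      rw [sub_eq_add_neg, add_pow, Finset.mul_sum]
      apply Finset.sum_congr rfl
      intro k _
      rw [neg_one_pow_eq_pow_mod_two]
      ring
    rw [this]
    apply Finset.sum_congr rfl
    intro k hk
    rw [zsmul_eq_mul]
    have : ((0 : ℕ) + k • 1 + 1) = k + 1 := by simp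
    rw [this]
    push_cast
    ring
end

section
/- For A, B, C, X ∈ H, set u := (X·A)(B⊗C − C⊗B) + (X·B)(C⊗A − A⊗C) + (X·C)(A⊗B − B⊗A) ∈ H ⊗ H (this is u1(X) for u1 = A∧B∧C ∈ Λ³H viewed inside H^{⊗3} ≅ Hom(H, H^{⊗2}) via the pairing in the first tensor slot). Then μ3(u ⊗ X) + μ3(X ⊗ u) = 0, where μ3 : H^{⊗3} → H is the linear map determined by μ3(X1⊗X2⊗X3) = (X1·X3)·X2. -/
noncomputable section

/-- The product `ι a * ι b`, i.e. the pure tensor `a ⊗ b ∈ H^{⊗2} ⊂ T(H)`. -/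
def pair {H : Type*} [AddCommGroup H] [Module ℚ H] (a b : H) : TensorAlgebra ℚ H :=
  TensorAlgebra.ι ℚ a * TensorAlgebra.ι ℚ b

/-- `u := (X·A)(B⊗C − C⊗B) + (X·B)(C⊗A − A⊗C) + (X·C)(A⊗B − B⊗A) ∈ H ⊗ H`,
which is `u1(X)` for `u1 = A∧B∧C ∈ Λ³H` viewed inside `Hom(H, H^{⊗2})`. -/
def uElt {H : Type*} [AddCommGroup H] [Module ℚ H]
    (ω : H →ₗ[ℚ] H →ₗ[ℚ] ℚ) (A B C X : H) : TensorAlgebra ℚ H :=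
  (ω X A) • (pair B C - pair C B) + (ω X B) • (pair C A - pair A C) +
    (ω X C) • (pair A B - pair B A)

/-- For `u1 = A∧B∧C ∈ Λ³H` and `X ∈ H`, one has `μ3(u1(X) ⊗ X) + μ3(X ⊗ u1(X)) = 0`,
where `μ3 : H^{⊗3} → H` is the linear map determined by `μ3(X1⊗X2⊗X3) = (X1·X3)·X2`.
This is the lemma `μ^alg((u1⊗1 + 1⊗u1)XX) = 0` of Kawazumi–Kuno. -/
theorem stmt4 {H : Type*} [AddCommGroup H] [Module ℚ H]
    (ω : H →ₗ[ℚ] H →ₗ[ℚ] ℚ) (hω : ∀ x, ω x x = 0)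
    (μ3 : TensorAlgebra ℚ H →ₗ[ℚ] H)
    (hμ3 : ∀ x y z : H,
      μ3 (TensorAlgebra.ι ℚ x * TensorAlgebra.ι ℚ y * TensorAlgebra.ι ℚ z) = ω x z • y)
    (A B C X : H) :
    μ3 (uElt ω A B C X * TensorAlgebra.ι ℚ X) +
      μ3 (TensorAlgebra.ι ℚ X * uElt ω A B C X) = 0 := by
  have hanti : ∀ x y : H, ω x y = - ω y x := by
    intro x y
    have h := hω (x + y)
    simp [map_add, hω x, hω y] at h
    linarith
  simp only [uElt, pair, add_mul, mul_add, sub_mul, mul_sub, smul_mul_assoc,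
    mul_smul_comm, map_add, map_sub, map_smul, ← mul_assoc, hμ3]
  rw [hanti B X, hanti C X, hanti A X]
  module

end
end
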